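/- The k-subalgebra of R_n generated by the set of power sums {p_k : k ∈ ℤ} is equal to Λ_n, the algebra of all symmetric Laurent polynomials. -/

import Mathlib

/-!
The `k`-subalgebra of `R_n` generated by the power sums `{p_k : k ∈ ℤ}` equals `Λ_n`,
the algebra of all symmetric Laurent polynomials.
-/

set_option linter.unusedSectionVars false
set_option maxHeartbeats 1000000

noncomputable section

variable (k : Type) [Field k] [CharZero k] (n : ℕ)

/-- The Laurent polynomial ring in `n` variables over `k`. -/
abbrev Rn : Type := AddMonoidAlgebra k (Fin n → ℤ)

/-- The monomial `z^γ = z_1^{γ_1} ⋯ z_n^{γ_n}`. -/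
def Z (γ : Fin n → ℤ) : Rn k n := AddMonoidAlgebra.single γ 1

/-- Permutation of the exponents, as an additive equivalence of `ℤ^n`. -/
def permAddEquiv (σ : Equiv.Perm (Fin n)) : (Fin n → ℤ) ≃+ (Fin n → ℤ) where
  toFun γ := γ ∘ σ
  invFun γ := γ ∘ σ.symm
  left_inv γ := by funext i; simp
  right_inv γ := by funext i; simp
  map_add' _ _ := rfl

/-- The action of a permutation `σ ∈ S_n` on `R_n` as a `k`-algebra automorphism,
permuting the variables (`z^γ ↦ z^{γ ∘ σ}`). -/
def permAlg (σ : Equiv.Perm (Fin n)) : Rn k n ≃ₐ[k] Rn k n :=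
  AddMonoidAlgebra.domCongr k k (permAddEquiv n σ)

/-- `Λ_n`, the subalgebra of symmetric Laurent polynomials. -/
def SymLaurent : Subalgebra k (Rn k n) where
  carrier := {f | ∀ σ : Equiv.Perm (Fin n), permAlg k n σ f = f}
  mul_mem' := fun {a b} ha hb σ => by rw [map_mul, ha σ, hb σ]
  add_mem' := fun {a b} ha hb σ => by rw [map_add, ha σ, hb σ]
  one_mem' := fun σ => map_one _
  zero_mem' := fun σ => map_zero _
  algebraMap_mem' := fun r σ => (permAlg k n σ).commutes r


/-- The power sum `p_m = z_1^m + ⋯ + z_n^m`. -/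
def psum (m : ℤ) : Rn k n := ∑ i : Fin n, Z k n (Pi.single i m)

-- basic lemmas on Z
lemma Z_mul (a b : Fin n → ℤ) : Z k n a * Z k n b = Z k n (a + b) := by
  simp [Z, AddMonoidAlgebra.single_mul_single]

lemma Z_zero : Z k n 0 = 1 := rfl

lemma Z_pow (a : Fin n → ℤ) (m : ℕ) : Z k n a ^ m = Z k n (m • a) := by
  simp [Z, AddMonoidAlgebra.single_pow]

lemma Z_sum {ι : Type} (s : Finset ι) (f : ι → (Fin n → ℤ)) :
    Z k n (∑ i ∈ s, f i) = ∏ i ∈ s, Z k n (f i) := by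
  classical
  induction s using Finset.induction with
  | empty => simp [Z_zero]
  | insert _ _ h ih => rw [Finset.sum_insert h, Finset.prod_insert h, ← Z_mul, ih]

lemma permAlg_Z (σ : Equiv.Perm (Fin n)) (γ : Fin n → ℤ) :
    permAlg k n σ (Z k n γ) = Z k n (γ ∘ σ) := by
  simp [permAlg, Z, permAddEquiv]

lemma single_comp_perm (σ : Equiv.Perm (Fin n)) (i : Fin n) (m : ℤ) :
    (Pi.single i m : Fin n → ℤ) ∘ σ = Pi.single (σ.symm i) m := by
  funext j
  simp [Pi.single_apply, Function.comp, Equiv.eq_symm_apply, eq_comm]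

-- psum is symmetric
lemma psum_mem_symLaurent (m : ℤ) : psum k n m ∈ SymLaurent k n := by
  intro σ
  rw [psum, map_sum]
  simp_rw [permAlg_Z, single_comp_perm]
  exact Fintype.sum_equiv σ.symm _ _ (fun i => rfl)

-- the embedding of ordinary polynomials
def emb : MvPolynomial (Fin n) k →ₐ[k] Rn k n :=
  MvPolynomial.aeval (fun i => Z k n (Pi.single i 1))

def castExp (t : Fin n →₀ ℕ) : Fin n → ℤ := fun i => (t i : ℤ)

lemma single_pi_cast (i : Fin n) (m : ℕ) :
    (m • (Pi.single i 1 : Fin n → ℤ)) = Pi.single i (m : ℤ) := by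
  funext j
  simp [Pi.single_apply]

lemma emb_monomial (t : Fin n →₀ ℕ) (r : k) :
    emb k n (MvPolynomial.monomial t r) = AddMonoidAlgebra.single (castExp n t) r := by
  rw [emb, MvPolynomial.aeval_monomial]
  rw [Finsupp.prod_fintype _ _ (fun i => pow_zero _)]
  have h1 : ∀ i : Fin n, Z k n (Pi.single i 1) ^ t i = Z k n (Pi.single i (t i : ℤ)) := fun i => by
    rw [Z_pow, single_pi_cast]
  simp_rw [h1]
  rw [← Z_sum]
  have h2 : (∑ i : Fin n, Pi.single i ((t i : ℤ)) : Fin n → ℤ) = castExp n t := by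
    funext j
    rw [Finset.sum_apply]
    simp [Pi.single_apply, castExp]
  rw [h2, AddMonoidAlgebra.coe_algebraMap, Function.comp_apply, Z,
    AddMonoidAlgebra.single_mul_single, zero_add, mul_one, Algebra.algebraMap_self_apply]

lemma castExp_injective : Function.Injective (castExp n) := by
  intro s t h
  ext i
  have := congrFun h i
  simp only [castExp] at this
  exact_mod_cast this

lemma emb_eq_mapDomain (p : MvPolynomial (Fin n) k) :
    AddMonoidAlgebra.coeff (emb k n p) = Finsupp.mapDomain (castExp n) (AddMonoidAlgebra.coeff p) := by
  induction p using MvPolynomial.induction_on' with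
  | monomial t r =>
    rw [emb_monomial]
    show _ = Finsupp.mapDomain (castExp n) (Finsupp.single t r)
    rw [Finsupp.mapDomain_single]
    rfl
  | add p q hp hq =>
    rw [map_add, AddMonoidAlgebra.coeff_add, AddMonoidAlgebra.coeff_add, hp, hq]
    exact (Finsupp.mapDomain_add).symm

lemma emb_injective : Function.Injective (emb k n) := by
  intro p q h
  have h' := congrArg AddMonoidAlgebra.coeff h
  rw [emb_eq_mapDomain, emb_eq_mapDomain] at h'
  exact AddMonoidAlgebra.coeff_injective (Finsupp.mapDomain_injective (castExp_injective n) h')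

-- intertwining
lemma permAlg_emb (σ : Equiv.Perm (Fin n)) (p : MvPolynomial (Fin n) k) :
    permAlg k n σ (emb k n p) = emb k n (MvPolynomial.rename σ.symm p) := by
  induction p using MvPolynomial.induction_on with
  | C r =>
    rw [MvPolynomial.rename_C, emb, MvPolynomial.aeval_C]
    exact (permAlg k n σ).commutes r
  | add p q hp hq => simp only [map_add, hp, hq]
  | mul_X p i hp =>
    simp only [map_mul]
    rw [hp]
    congr 1
    rw [MvPolynomial.rename_X]
    show permAlg k n σ (emb k n (MvPolynomial.X i)) = emb k n (MvPolynomial.X (σ.symm i))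
    rw [emb, MvPolynomial.aeval_X, MvPolynomial.aeval_X, permAlg_Z, single_comp_perm]

-- emb of MvPolynomial.psum
lemma emb_psum (m : ℕ) : emb k n (MvPolynomial.psum (Fin n) k m) = psum k n (m : ℤ) := by
  rw [MvPolynomial.psum, map_sum, psum]
  refine Finset.sum_congr rfl fun i _ => ?_
  rw [map_pow, emb, MvPolynomial.aeval_X, Z_pow, single_pi_cast]

-- esymm lies in the adjoin of power sums (Newton's identities, char 0)
lemma esymm_mem_adjoin_psum (m : ℕ) :
    MvPolynomial.esymm (Fin n) k m ∈
      Algebra.adjoin k (Set.range (MvPolynomial.psum (Fin n) k)) := by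
  induction m using Nat.strong_induction_on with
  | _ m ih =>
    match m with
    | 0 => simpa [MvPolynomial.esymm_zero] using Subalgebra.one_mem _
    | (m + 1) =>
      set B := Algebra.adjoin k (Set.range (MvPolynomial.psum (Fin n) k)) with hB
      have hsum : ((m + 1 : ℕ) : MvPolynomial (Fin n) k) * MvPolynomial.esymm (Fin n) k (m + 1)
          ∈ B := by
        rw [MvPolynomial.mul_esymm_eq_sum]
        refine Subalgebra.mul_mem _ ?_ (Subalgebra.sum_mem _ fun a ha => ?_)
        · exact Subalgebra.pow_mem _ (Subalgebra.neg_mem _ (Subalgebra.one_mem _)) _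
        · simp only [Finset.mem_filter, Finset.mem_antidiagonal] at ha
          exact Subalgebra.mul_mem _
            (Subalgebra.mul_mem _
              (Subalgebra.pow_mem _ (Subalgebra.neg_mem _ (Subalgebra.one_mem _)) _)
              (ih a.1 (by omega)))
            (Algebra.subset_adjoin ⟨a.2, rfl⟩)
      have hcast : ((m + 1 : ℕ) : MvPolynomial (Fin n) k) * MvPolynomial.esymm (Fin n) k (m + 1)
          = ((m + 1 : ℕ) : k) • MvPolynomial.esymm (Fin n) k (m + 1) := by
        rw [← MvPolynomial.C_eq_coe_nat, MvPolynomial.smul_eq_C_mul]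
      have hne : ((m + 1 : ℕ) : k) ≠ 0 := Nat.cast_ne_zero.mpr (Nat.succ_ne_zero m)
      have heq : MvPolynomial.esymm (Fin n) k (m + 1)
          = ((m + 1 : ℕ) : k)⁻¹ • (((m + 1 : ℕ) : MvPolynomial (Fin n) k) *
              MvPolynomial.esymm (Fin n) k (m + 1)) := by
        rw [hcast, smul_smul, inv_mul_cancel₀ hne, one_smul]
      rw [heq]
      exact Subalgebra.smul_mem _ hsum _

-- emb of esymm lies in adjoin of Laurent power sums
lemma emb_esymm_mem (m : ℕ) :
    emb k n (MvPolynomial.esymm (Fin n) k m) ∈ Algebra.adjoin k (Set.range (psum k n)) := by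
  have h := esymm_mem_adjoin_psum k n m
  have himg : emb k n (MvPolynomial.esymm (Fin n) k m) ∈
      (Algebra.adjoin k (Set.range (MvPolynomial.psum (Fin n) k))).map (emb k n) :=
    Subalgebra.mem_map.mpr ⟨_, h, rfl⟩
  rw [AlgHom.map_adjoin] at himg
  refine Algebra.adjoin_mono ?_ himg
  rintro x ⟨y, ⟨m', rfl⟩, rfl⟩
  exact ⟨(m' : ℤ), (emb_psum k n m').symm⟩

-- inversion automorphism
def negAddEquiv : (Fin n → ℤ) ≃+ (Fin n → ℤ) where
  toFun γ := -γ
  invFun γ := -γ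
  left_inv γ := by simp
  right_inv γ := by simp
  map_add' a b := neg_add a b

def invAlg : Rn k n ≃ₐ[k] Rn k n :=
  AddMonoidAlgebra.domCongr k k (negAddEquiv n)

lemma invAlg_Z (γ : Fin n → ℤ) : invAlg k n (Z k n γ) = Z k n (-γ) := by
  simp [invAlg, Z, negAddEquiv]

lemma invAlg_psum (m : ℤ) : invAlg k n (psum k n m) = psum k n (-m) := by
  rw [psum, map_sum, psum]
  refine Finset.sum_congr rfl fun i _ => ?_
  rw [invAlg_Z]
  congr 1
  funext j
  by_cases h : j = i <;> simp [Pi.single_apply, h]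

lemma invAlg_adjoin_mem {x : Rn k n} (hx : x ∈ Algebra.adjoin k (Set.range (psum k n))) :
    invAlg k n x ∈ Algebra.adjoin k (Set.range (psum k n)) := by
  have himg : invAlg k n x ∈
      (Algebra.adjoin k (Set.range (psum k n))).map (invAlg k n).toAlgHom :=
    Subalgebra.mem_map.mpr ⟨_, hx, rfl⟩
  rw [AlgEquiv.toAlgHom_eq_coe, AlgHom.map_adjoin] at himg
  refine Algebra.adjoin_mono ?_ himg
  rintro y ⟨z, ⟨m, rfl⟩, rfl⟩
  exact ⟨-m, (invAlg_psum k n m).symm⟩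

-- Z of constant vectors
lemma Z_const_one_eq_emb_esymm :
    Z k n (fun _ => (1 : ℤ)) = emb k n (MvPolynomial.esymm (Fin n) k n) := by
  have hcard : Finset.powersetCard n (Finset.univ : Finset (Fin n)) = {Finset.univ} := by
    have h := Finset.powersetCard_self (Finset.univ : Finset (Fin n))
    rwa [Finset.card_fin] at h
  rw [MvPolynomial.esymm, hcard, Finset.sum_singleton, map_prod]
  have hX : ∀ i : Fin n, emb k n (MvPolynomial.X i) = Z k n (Pi.single i 1) := fun i => by
    rw [emb, MvPolynomial.aeval_X]
  simp_rw [hX]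
  rw [← Z_sum]
  congr 1
  funext j
  rw [Finset.sum_apply]
  simp [Pi.single_apply]

lemma Z_const_mem (N : ℕ) :
    Z k n (fun _ => -(N : ℤ)) ∈ Algebra.adjoin k (Set.range (psum k n)) := by
  have h1 : Z k n (fun _ => (1:ℤ)) ∈ Algebra.adjoin k (Set.range (psum k n)) := by
    rw [Z_const_one_eq_emb_esymm]; exact emb_esymm_mem k n n
  have hN : Z k n (fun _ => (N : ℤ)) ∈ Algebra.adjoin k (Set.range (psum k n)) := by
    have hEq : Z k n (fun _ => (N:ℤ)) = Z k n (fun _ => (1:ℤ)) ^ N := by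
      rw [Z_pow]; congr 1; funext j; simp
    rw [hEq]; exact Subalgebra.pow_mem _ h1 _
  have h2 := invAlg_adjoin_mem k n hN
  rwa [invAlg_Z, show -(fun _ => (N:ℤ)) = (fun _ : Fin n => -(N:ℤ)) from rfl] at h2

-- surjectivity of emb onto nonneg-exponent elements
lemma exists_emb_preimage (f : Rn k n)
    (h : ∀ γ ∈ f.coeff.support, ∀ i, 0 ≤ γ i) : ∃ P, emb k n P = f := by
  classical
  refine ⟨∑ γ ∈ f.coeff.support, MvPolynomial.monomial
    (Finsupp.equivFunOnFinite.symm (fun i => (γ i).toNat)) (f.coeff γ), ?_⟩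
  rw [map_sum]
  have key : ∀ γ ∈ f.coeff.support,
      emb k n (MvPolynomial.monomial (Finsupp.equivFunOnFinite.symm (fun i => (γ i).toNat)) (f.coeff γ))
        = AddMonoidAlgebra.single γ (f.coeff γ) := by
    intro γ hγ
    rw [emb_monomial]
    congr 1
    funext i
    simp only [castExp, Finsupp.coe_equivFunOnFinite_symm]
    exact Int.toNat_of_nonneg (h γ hγ i)
  rw [Finset.sum_congr rfl key]
  exact AddMonoidAlgebra.sum_coeff_single f

theorem stmt3 (hn : 0 < n) :
    Algebra.adjoin k (Set.range (psum k n)) = SymLaurent k n := by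
  apply le_antisymm
  · rw [Algebra.adjoin_le_iff]
    rintro x ⟨m, rfl⟩
    exact psum_mem_symLaurent k n m
  · intro f hf
    classical
    set N : ℕ := f.coeff.support.sup (fun δ => Finset.univ.sup fun j => (-(δ j)).toNat) with hN
    set c : Fin n → ℤ := fun _ => (N : ℤ) with hc
    set g : Rn k n := Z k n c * f with hg
    have hgsupp : ∀ γ ∈ g.coeff.support, ∀ i, 0 ≤ γ i := by
      intro γ hγ i
      have hγ' : g.coeff γ ≠ 0 := by simpa [Finsupp.mem_support_iff] using hγ
      have hgγ : g.coeff γ = f.coeff (-c + γ) := by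
        rw [hg, Z]
        rw [AddMonoidAlgebra.coeff_single_mul_apply, one_mul]
      rw [hgγ] at hγ'
      have hmem : -c + γ ∈ f.coeff.support := Finsupp.mem_support_iff.mpr hγ'
      have hb : (-((-c + γ) i)).toNat ≤ N := by
        calc (-((-c + γ) i)).toNat
            ≤ Finset.univ.sup (fun j => (-((-c + γ) j)).toNat) :=
              Finset.le_sup (f := fun j => (-((-c + γ) j)).toNat) (Finset.mem_univ i)
          _ ≤ N := by
              rw [hN]
              exact Finset.le_sup (f := fun δ => Finset.univ.sup fun j => (-(δ j)).toNat) hmem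
      have h2 : -((-c + γ) i) ≤ (N : ℤ) :=
        le_trans (Int.self_le_toNat _) (by exact_mod_cast hb)
      have h3 : -(-(N:ℤ) + γ i) ≤ (N : ℤ) := by
        have : (-c + γ) i = -(N:ℤ) + γ i := rfl
        rwa [this] at h2
      linarith
    have hgsym : ∀ σ : Equiv.Perm (Fin n), permAlg k n σ g = g := by
      intro σ
      rw [hg, map_mul, hf σ, permAlg_Z]
      congr 1
    obtain ⟨P, hP⟩ := exists_emb_preimage k n g hgsupp
    have hPsym : MvPolynomial.IsSymmetric P := by
      intro σ
      apply emb_injective k n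
      have h := permAlg_emb k n σ.symm P
      rw [Equiv.symm_symm] at h
      rw [← h, hP, hgsym σ.symm]
    obtain ⟨Q, hQ⟩ := MvPolynomial.esymmAlgHom_surjective (n := n) k
      (by simp) ⟨P, hPsym⟩
    have hPval : P = MvPolynomial.aeval
        (fun i : Fin n => MvPolynomial.esymm (Fin n) k ((i : ℕ) + 1)) Q := by
      have h := congrArg Subtype.val hQ
      rw [MvPolynomial.esymmAlgHom_apply] at h
      exact h.symm
    have hembP : emb k n P ∈ Algebra.adjoin k (Set.range (psum k n)) := by
      rw [hPval, MvPolynomial.comp_aeval_apply]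
      have hmem : MvPolynomial.aeval
          (fun i : Fin n => emb k n (MvPolynomial.esymm (Fin n) k ((i : ℕ) + 1))) Q ∈
          Algebra.adjoin k
            (Set.range (fun i : Fin n => emb k n (MvPolynomial.esymm (Fin n) k ((i : ℕ) + 1)))) := by
        rw [Algebra.adjoin_range_eq_range_aeval]
        exact ⟨Q, rfl⟩
      refine Algebra.adjoin_le ?_ hmem
      rintro x ⟨i, rfl⟩
      exact emb_esymm_mem k n ((i : ℕ) + 1)
    have hfinal : f = Z k n (fun _ => -(N : ℤ)) * emb k n P := by
      rw [hP, hg, ← mul_assoc, Z_mul]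
      have hzero : (fun _ : Fin n => -(N:ℤ)) + c = 0 := by funext j; simp [hc]
      rw [hzero, Z_zero, one_mul]
    rw [hfinal]
    exact Subalgebra.mul_mem _ (Z_const_mem k n N) hembP


end
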